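/- Let ω(t,x) be a power series in t with coefficients sections over an abelian variety S, η(x) a section, and suppose ω'(t,x) = Σ_{i=0}^{i₀−1} c_i t^i ω(t,x) + η(x) t^{i₀} mod (t^{i₀+1}) with 0 ≤ i₀ ≤ ν−1, and P̃(t^ν ω, ω') ≡ 0 mod (t^{2ν}), where P̃ satisfies the multiplication rule P̃(t^i r, t^j s) = t^{i+j} P̃(r,s) + (1/2)(i−j)t^{i+j−1}(r s_a − r_a s) and P̃(t^ν ω, t^i ω) = 0. Then (ν − i₀)·t^{ν+i₀−1}·ω(0,x)·ω(0,x−a)·(η(x)/ω(0,x) − η(x−a)/ω(0,x−a)) ≡ 0 mod (t^{ν+i₀}); hence if ν > i₀ and ω(0,·) ≢ 0, the meromorphic function η(x)/ω(0,x) on S is invariant under translation by a. -/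

import Mathlib

/-!
Write `ω' = Σ_{i<i₀} c_i t^i ω + η t^{i₀} + t^{i₀+1} q`. By additivity of `P̃` in its second
argument the terms `c_i t^i ω` contribute nothing, and by the multiplication rule the
coefficient of `t^{ν+i₀-1}` in `P̃(t^ν ω, ω')` is `½(ν - i₀)(ω₀ η_a - (ω₀)_a η)`, the remainder
`t^{i₀+1} q` only entering from degree `ν+i₀` on. Since `ν + i₀ - 1 < 2ν`, this coefficient
vanishes, and as `ν - i₀` is a unit in a `ℚ`-algebra, `ω₀ η_a = (ω₀)_a η` already holds exactly.
-/

open PowerSeries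

namespace PowerSeries

variable {F : Type*} [CommRing F]

lemma coeff_eq_zero_of_mem_span_X_pow {n k : ℕ} {f : F⟦X⟧}
    (hf : f ∈ Ideal.span {(X : F⟦X⟧) ^ k}) (hn : n < k) : coeff n f = 0 :=
  X_pow_dvd_iff.mp (Ideal.mem_span_singleton.mp hf) n hn

lemma constantCoeff_map {R S : Type*} [CommRing R] [CommRing S] (f : R →+* S) (φ : R⟦X⟧) :
    constantCoeff (map f φ) = f (constantCoeff φ) := by
  simp only [← coeff_zero_eq_constantCoeff_apply, coeff_map]

variable [Algebra ℚ F]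

/-- The multiplication rule of `P̃` for powers of `t = X`; the translate `r_a` is `map T r`. -/
def MulRule (T : F ≃+* F) (Pt : F⟦X⟧ → F⟦X⟧ → F⟦X⟧) : Prop :=
  ∀ (i j : ℕ) (r s : F⟦X⟧),
    Pt (X ^ i * r) (X ^ j * s) = X ^ (i + j) * Pt r s
      + (((i : ℚ) - (j : ℚ)) / 2) •
        (X ^ (i + j - 1) * (r * map (T : F →+* F) s - map (T : F →+* F) r * s))

variable {T : F ≃+* F} {Pt : F⟦X⟧ → F⟦X⟧ → F⟦X⟧}

lemma MulRule.coeff_add_sub_one (hrule : MulRule T Pt) {i j : ℕ} (hij : 0 < i + j)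
    (r s : F⟦X⟧) :
    coeff (i + j - 1) (Pt (X ^ i * r) (X ^ j * s))
      = (((i : ℚ) - (j : ℚ)) / 2) •
        (constantCoeff r * T (constantCoeff s) - T (constantCoeff r) * constantCoeff s) := by
  rw [hrule, map_add, coeff_X_pow_mul', if_neg (by omega), zero_add, coeff_smul,
    coeff_X_pow_mul', if_pos le_rfl, Nat.sub_self]
  simp only [coeff_zero_eq_constantCoeff_apply, map_sub, map_mul, constantCoeff_map,
    RingEquiv.coe_toRingHom]

lemma MulRule.coeff_eq_zero_of_lt (hrule : MulRule T Pt) {i j n : ℕ} (hn : n + 1 < i + j)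
    (r s : F⟦X⟧) : coeff n (Pt (X ^ i * r) (X ^ j * s)) = 0 := by
  rw [hrule, map_add, coeff_X_pow_mul', if_neg (by omega), zero_add, coeff_smul,
    coeff_X_pow_mul', if_neg (by omega), smul_zero]

lemma MulRule.coeff_bracket (hrule : MulRule T Pt)
    (haddr : ∀ r s s', Pt r (s + s') = Pt r s + Pt r s')
    (hsmul : ∀ (q : ℚ) (r s : F⟦X⟧), Pt r (q • s) = q • Pt r s)
    {ω ω' : F⟦X⟧} {η : F} {c : ℕ → ℚ} {ν i₀ : ℕ} (hνi₀ : 0 < ν + i₀)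
    (hzero : ∀ i : ℕ, Pt (X ^ ν * ω) (X ^ i * ω) = 0)
    (hω' : ω' - (∑ i ∈ Finset.range i₀, c i • (X ^ i * ω) + C η * X ^ i₀)
      ∈ Ideal.span {(X : F⟦X⟧) ^ (i₀ + 1)}) :
    coeff (ν + i₀ - 1) (Pt (X ^ ν * ω) ω')
      = (((ν : ℚ) - (i₀ : ℚ)) / 2) •
        (constantCoeff ω * T η - T (constantCoeff ω) * η) := by
  obtain ⟨q, hq⟩ := Ideal.mem_span_singleton.mp hω'
  have hω'_eq : ω' = ∑ i ∈ Finset.range i₀, c i • (X ^ i * ω) + X ^ i₀ * C η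
      + X ^ (i₀ + 1) * q := by
    linear_combination hq
  let L : F⟦X⟧ →ₗ[ℚ] F⟦X⟧ :=
    { toFun := Pt (X ^ ν * ω), map_add' := haddr _, map_smul' := fun q s => hsmul q _ s }
  have hsum : Pt (X ^ ν * ω) (∑ i ∈ Finset.range i₀, c i • (X ^ i * ω)) = 0 := by
    change L _ = 0
    simp only [map_sum, map_smul]
    exact Finset.sum_eq_zero fun i _ => by simp [L, hzero]
  rw [hω'_eq, haddr, haddr, hsum, zero_add, map_add, hrule.coeff_add_sub_one hνi₀,
    hrule.coeff_eq_zero_of_lt (by omega), add_zero, constantCoeff_C]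

end PowerSeries

/-- Sections over `S` are modelled by the ring `F`, the translation `r ↦ r_a` by `T0`, and `t`
by `X`. -/
theorem stmt15_general {F : Type*} [CommRing F] [Algebra ℚ F]
    (T0 : F ≃+* F)
    (Pt : PowerSeries F → PowerSeries F → PowerSeries F)
    (ω ω' : PowerSeries F) (η : F) (c : ℕ → ℚ) (ν i₀ : ℕ)
    (hi₀ : i₀ < ν)
    -- P̃ is biadditive and ℚ-bilinear in the second variable
    (haddr : ∀ r s s', Pt r (s + s') = Pt r s + Pt r s')
    (hsmul : ∀ (q : ℚ) (r s : PowerSeries F), Pt r (q • s) = q • Pt r s)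
    -- the multiplication rule for powers of t
    (hrule : ∀ (i j : ℕ) (r s : PowerSeries F),
      Pt ((X : PowerSeries F) ^ i * r) ((X : PowerSeries F) ^ j * s)
        = (X : PowerSeries F) ^ (i + j) * Pt r s
          + (((i : ℚ) - (j : ℚ)) / 2) •
            ((X : PowerSeries F) ^ (i + j - 1)
              * (r * PowerSeries.map (T0 : F →+* F) s
                 - PowerSeries.map (T0 : F →+* F) r * s)))
    -- P̃(t^ν ω, t^i ω) = 0
    (hzero : ∀ i : ℕ, Pt ((X : PowerSeries F) ^ ν * ω) ((X : PowerSeries F) ^ i * ω) = 0)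
    -- ω' = Σ_{i<i₀} c_i t^i ω + η t^{i₀}  mod (t^{i₀+1})
    (hω' : ω' - (∑ i ∈ Finset.range i₀, c i • ((X : PowerSeries F) ^ i * ω)
        + (PowerSeries.C : F →+* PowerSeries F) η * (X : PowerSeries F) ^ i₀)
      ∈ Ideal.span ({(X : PowerSeries F) ^ (i₀ + 1)} : Set (PowerSeries F)))
    -- P̃(t^ν ω, ω') ≡ 0 mod (t^{2ν})
    (hPt : Pt ((X : PowerSeries F) ^ ν * ω) ω'
      ∈ Ideal.span ({(X : PowerSeries F) ^ (2 * ν)} : Set (PowerSeries F))) :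
    -- the displayed congruence, with ω₀ = ω(0,·) the constant coefficient of ω
    (((ν : ℚ) - (i₀ : ℚ)) •
        ((X : PowerSeries F) ^ (ν + i₀ - 1)
          * (PowerSeries.C : F →+* PowerSeries F)
              (η * T0 ((PowerSeries.constantCoeff : PowerSeries F →+* F) ω)
                - T0 η * (PowerSeries.constantCoeff : PowerSeries F →+* F) ω))
      ∈ Ideal.span ({(X : PowerSeries F) ^ (ν + i₀)} : Set (PowerSeries F))) ∧
    -- hence η/ω(0,·) is invariant under translation by a
    ((PowerSeries.constantCoeff : PowerSeries F →+* F) ω ≠ 0 →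
      η * T0 ((PowerSeries.constantCoeff : PowerSeries F →+* F) ω)
        = T0 η * (PowerSeries.constantCoeff : PowerSeries F →+* F) ω) := by
  have hcoeff := MulRule.coeff_bracket hrule haddr hsmul (by omega) hzero hω'
  rw [coeff_eq_zero_of_mem_span_X_pow hPt (by omega), eq_comm, smul_eq_zero] at hcoeff
  have hscalar : ((ν : ℚ) - (i₀ : ℚ)) / 2 ≠ 0 :=
    div_ne_zero (sub_ne_zero.mpr (by exact_mod_cast hi₀.ne')) two_ne_zero
  have hinv : η * T0 (constantCoeff ω) = T0 η * constantCoeff ω := by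
    linear_combination -(hcoeff.resolve_left hscalar)
  exact ⟨by simp [hinv], fun _ => hinv⟩

/-- the key computation in the induction on `i₀` in Lemma 3.
Sections over the abelian variety `S` are modelled by the ring `F`, with the
translation `r ↦ r_a` given by `T0`; power series in `t` with section
coefficients are `PowerSeries F`, with `t = X`. -/
theorem stmt15 {F : Type*} [CommRing F] [IsDomain F] [Algebra ℚ F]
    (T0 : F ≃+* F)
    (Pt : PowerSeries F → PowerSeries F → PowerSeries F)
    (ω ω' : PowerSeries F) (η : F) (c : ℕ → ℚ) (ν i₀ : ℕ)
    (hi₀ : i₀ < ν)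
    -- P̃ is biadditive and ℚ-bilinear in the second variable
    (haddr : ∀ r s s', Pt r (s + s') = Pt r s + Pt r s')
    (hsmul : ∀ (q : ℚ) (r s : PowerSeries F), Pt r (q • s) = q • Pt r s)
    -- the multiplication rule for powers of t
    (hrule : ∀ (i j : ℕ) (r s : PowerSeries F),
      Pt ((X : PowerSeries F) ^ i * r) ((X : PowerSeries F) ^ j * s)
        = (X : PowerSeries F) ^ (i + j) * Pt r s
          + (((i : ℚ) - (j : ℚ)) / 2) •
            ((X : PowerSeries F) ^ (i + j - 1)
              * (r * PowerSeries.map (T0 : F →+* F) s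
                 - PowerSeries.map (T0 : F →+* F) r * s)))
    -- P̃(t^ν ω, t^i ω) = 0
    (hzero : ∀ i : ℕ, Pt ((X : PowerSeries F) ^ ν * ω) ((X : PowerSeries F) ^ i * ω) = 0)
    -- ω' = Σ_{i<i₀} c_i t^i ω + η t^{i₀}  mod (t^{i₀+1})
    (hω' : ω' - (∑ i ∈ Finset.range i₀, c i • ((X : PowerSeries F) ^ i * ω)
        + (PowerSeries.C : F →+* PowerSeries F) η * (X : PowerSeries F) ^ i₀)
      ∈ Ideal.span ({(X : PowerSeries F) ^ (i₀ + 1)} : Set (PowerSeries F)))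
    -- P̃(t^ν ω, ω') ≡ 0 mod (t^{2ν})
    (hPt : Pt ((X : PowerSeries F) ^ ν * ω) ω'
      ∈ Ideal.span ({(X : PowerSeries F) ^ (2 * ν)} : Set (PowerSeries F))) :
    -- the displayed congruence, with ω₀ = ω(0,·) the constant coefficient of ω
    (((ν : ℚ) - (i₀ : ℚ)) •
        ((X : PowerSeries F) ^ (ν + i₀ - 1)
          * (PowerSeries.C : F →+* PowerSeries F)
              (η * T0 ((PowerSeries.constantCoeff : PowerSeries F →+* F) ω)
                - T0 η * (PowerSeries.constantCoeff : PowerSeries F →+* F) ω))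
      ∈ Ideal.span ({(X : PowerSeries F) ^ (ν + i₀)} : Set (PowerSeries F))) ∧
    -- hence η/ω(0,·) is invariant under translation by a
    ((PowerSeries.constantCoeff : PowerSeries F →+* F) ω ≠ 0 →
      η * T0 ((PowerSeries.constantCoeff : PowerSeries F →+* F) ω)
        = T0 η * (PowerSeries.constantCoeff : PowerSeries F →+* F) ω) :=
  stmt15_general T0 Pt ω ω' η c ν i₀ hi₀ haddr hsmul hrule hzero hω' hPt
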